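/- Let R, R̂ ∈ SO(3), P, P̂ ∈ ℝ³, and let T, T̂ be the corresponding 4×4 homogeneous transformation matrices with last row (0,0,0,1). Let p ∈ ℝ³, write p̄ = (p, 1) ∈ ℝ⁴, and set y = Rᵀ(p − P) (so that ȳ = (y,1) = T⁻¹p̄). Then, for any b = (b_Ω, b_V) ∈ ℝ³ × ℝ³, the product T̂·[b]_∧·T̂⁻¹·(T̂T⁻¹)·p̄ equals the 4-vector whose first three components are −[R̂y]_× R̂ b_Ω + R̂ b_V and whose fourth component is 0; equivalently it equals the block matrix [[−R̂[y]_×, R̂],[0, 0]] applied to b (padded with a zero fourth row). -/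

import Mathlib

open Matrix

noncomputable section

/-- The special orthogonal group SO(3): real 3×3 matrices with
`R * Rᵀ = Rᵀ * R = I₃` and `det R = 1`. -/
def SO3 (R : Matrix (Fin 3) (Fin 3) ℝ) : Prop :=
  R * Rᵀ = 1 ∧ Rᵀ * R = 1 ∧ R.det = 1

/-- The skew-symmetric matrix `[a]ₓ` associated to `a ∈ ℝ³`, satisfying
`[a]ₓ b = a × b`. -/
def skew (a : Fin 3 → ℝ) : Matrix (Fin 3) (Fin 3) ℝ :=
  !![0, -a 2, a 1; a 2, 0, -a 0; -a 1, a 0, 0]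

/-- Anti-symmetric projection `P_a(X) = (X - Xᵀ)/2`. -/
def Pa (X : Matrix (Fin 3) (Fin 3) ℝ) : Matrix (Fin 3) (Fin 3) ℝ :=
  (1 / 2 : ℝ) • (X - Xᵀ)

/-- The `vex` map, inverse of `skew` on skew-symmetric matrices. -/
def vex (X : Matrix (Fin 3) (Fin 3) ℝ) : Fin 3 → ℝ :=
  ![X 2 1, X 0 2, X 1 0]

/-- Normalized Euclidean distance `‖A‖_I = (1/4)·Tr(I₃ − A)`. -/
def normI (A : Matrix (Fin 3) (Fin 3) ℝ) : ℝ :=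
  (1 / 4 : ℝ) * Matrix.trace (1 - A)

/-- Homogeneous transformation matrix on `ℝ⁴ = ℝ³ ⊕ ℝ`: rotation block `R`,
translation column `P`, last row `(0,0,0,1)`. -/
def Hom (R : Matrix (Fin 3) (Fin 3) ℝ) (P : Fin 3 → ℝ) :
    Matrix (Fin 3 ⊕ Fin 1) (Fin 3 ⊕ Fin 1) ℝ :=
  Matrix.fromBlocks R (Matrix.of fun i _ => P i) 0 1

/-- The wedge map `[b]_∧` for `b = (bΩ, bV) ∈ ℝ³ × ℝ³`: upper-left block
`[bΩ]ₓ`, upper-right column `bV`, zero last row. -/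
def wedge (bΩ bV : Fin 3 → ℝ) : Matrix (Fin 3 ⊕ Fin 1) (Fin 3 ⊕ Fin 1) ℝ :=
  Matrix.fromBlocks (skew bΩ) (Matrix.of fun i _ => bV i) 0 0

/-! Since `T̂⁻¹T̂ = I`, the product collapses to `T̂ [b]_∧ ȳ` with `ȳ = T⁻¹p̄ = (y, 1)`. Then
`[b]_∧ ȳ = (b_Ω × y + b_V, 0)`, and a rotation commutes with the cross product, so
`R̂ (b_Ω × y) = R̂b_Ω × R̂y = -[R̂y]ₓ R̂b_Ω`. -/

lemma skew_mulVec (a b : Fin 3 → ℝ) : skew a *ᵥ b = a ⨯₃ b := by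
  ext i
  fin_cases i <;> simp [skew, cross_apply, mulVec, dotProduct, Fin.sum_univ_three] <;> ring

lemma cross_mulVec_mulVec {K : Type*} [CommRing K] (M : Matrix (Fin 3) (Fin 3) K)
    (a b : Fin 3 → K) : (M *ᵥ a) ⨯₃ (M *ᵥ b) = M.adjugateᵀ *ᵥ (a ⨯₃ b) := by
  ext i
  fin_cases i <;>
    simp [adjugate_fin_three, cross_apply, mulVec, dotProduct, Fin.sum_univ_three] <;> ring

lemma SO3.adjugate_eq_transpose {R : Matrix (Fin 3) (Fin 3) ℝ} (hR : SO3 R) :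
    R.adjugate = Rᵀ := by
  rw [← inv_eq_right_inv hR.1, inv_def, hR.2.2, Ring.inverse_one, one_smul]

lemma SO3.mulVec_cross {R : Matrix (Fin 3) (Fin 3) ℝ} (hR : SO3 R) (a b : Fin 3 → ℝ) :
    R *ᵥ (a ⨯₃ b) = (R *ᵥ a) ⨯₃ (R *ᵥ b) := by
  rw [cross_mulVec_mulVec, hR.adjugate_eq_transpose, transpose_transpose]

lemma Hom_mulVec (R : Matrix (Fin 3) (Fin 3) ℝ) (P v : Fin 3 → ℝ) (c : ℝ) :
    Hom R P *ᵥ Sum.elim v (fun _ => c) = Sum.elim (R *ᵥ v + c • P) (fun _ => c) := by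
  rw [Hom, fromBlocks_mulVec]
  ext (i | i) <;> simp [mulVec, dotProduct, mul_comm]

lemma wedge_mulVec (bΩ bV v : Fin 3 → ℝ) (c : ℝ) :
    wedge bΩ bV *ᵥ Sum.elim v (fun _ => c) = Sum.elim (bΩ ⨯₃ v + c • bV) (fun _ => 0) := by
  rw [wedge, fromBlocks_mulVec, skew_mulVec]
  ext (i | i) <;> simp [mulVec, dotProduct, mul_comm]

lemma Hom_transpose_mul_Hom {R : Matrix (Fin 3) (Fin 3) ℝ} (hR : Rᵀ * R = 1) (P : Fin 3 → ℝ) :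
    Hom Rᵀ (-(Rᵀ *ᵥ P)) * Hom R P = 1 := by
  rw [Hom, Hom, fromBlocks_multiply, hR, ← fromBlocks_one]
  congr 1 <;> ext i j <;> simp [mul_apply, mulVec, dotProduct]

theorem stmt8_general (R Rh : Matrix (Fin 3) (Fin 3) ℝ) (hRh : SO3 Rh)
    (P Ph p bΩ bV : Fin 3 → ℝ) (y : Fin 3 → ℝ) (hy : y = Rᵀ *ᵥ (p - P)) :
    (Hom Rh Ph * wedge bΩ bV * Hom Rhᵀ (-(Rhᵀ *ᵥ Ph)) *
        (Hom Rh Ph * Hom Rᵀ (-(Rᵀ *ᵥ P)))) *ᵥ Sum.elim p (fun _ => (1 : ℝ)) =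
      Sum.elim (-(skew (Rh *ᵥ y) *ᵥ (Rh *ᵥ bΩ)) + Rh *ᵥ bV) (fun _ => (0 : ℝ)) := by
  have hy_homog : Hom Rᵀ (-(Rᵀ *ᵥ P)) *ᵥ Sum.elim p (fun _ => 1) = Sum.elim y (fun _ => 1) := by
    rw [Hom_mulVec, hy, one_smul, mulVec_sub, sub_eq_add_neg]
  calc _ = Hom Rh Ph *ᵥ (wedge bΩ bV *ᵥ (Hom Rᵀ (-(Rᵀ *ᵥ P)) *ᵥ Sum.elim p fun _ => 1)) := by
        rw [mul_assoc _ _ (Hom Rh Ph * _), ← mul_assoc (Hom Rhᵀ _),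
          Hom_transpose_mul_Hom hRh.2.1, one_mul, ← mulVec_mulVec, ← mulVec_mulVec]
    _ = _ := by
      rw [hy_homog, wedge_mulVec, Hom_mulVec, one_smul, zero_smul, add_zero, mulVec_add,
        hRh.mulVec_cross, skew_mulVec, cross_anticomm]

/-- with `y = Rᵀ(p − P)`, the product
`T̂·[b]_∧·T̂⁻¹·(T̂T⁻¹)·p̄` (with `p̄ = (p,1)`) equals the 4-vector with first
three components `−[R̂y]ₓR̂bΩ + R̂bV` and fourth component `0`. -/
theorem stmt8 (R Rh : Matrix (Fin 3) (Fin 3) ℝ) (hR : SO3 R) (hRh : SO3 Rh)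
    (P Ph p bΩ bV : Fin 3 → ℝ) (y : Fin 3 → ℝ) (hy : y = Rᵀ *ᵥ (p - P)) :
    (Hom Rh Ph * wedge bΩ bV * Hom Rhᵀ (-(Rhᵀ *ᵥ Ph)) *
        (Hom Rh Ph * Hom Rᵀ (-(Rᵀ *ᵥ P)))) *ᵥ Sum.elim p (fun _ => (1 : ℝ)) =
      Sum.elim (-(skew (Rh *ᵥ y) *ᵥ (Rh *ᵥ bΩ)) + Rh *ᵥ bV) (fun _ => (0 : ℝ)) :=
  stmt8_general R Rh hRh P Ph p bΩ bV y hy
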